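/- arXiv:2008.07576 — 2 statements merged into one kernel-verified Lean document; each statement's English description precedes it below -/
import Mathlib

section
/- Let β > 3/2. Then there is a constant C such that for every x ∈ ℝ³ one has (∫_{ℝ³} ⟨z⟩^{−2β} / |x − z|² dz)^{1/2} ≤ C / ⟨x⟩; equivalently, the function z ↦ ⟨z⟩^{−β} / |x − z| has L²(ℝ³) norm at most C/⟨x⟩. -/
open MeasureTheory Real Set Module
open scoped ENNReal

noncomputable section

abbrev E3 := EuclideanSpace ℝ (Fin 3)

/-- Japanese bracket on ℝ³. -/
def jap (x : E3) : ℝ := Real.sqrt (1 + ‖x‖ ^ 2)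

lemma jap_pos (x : E3) : 0 < jap x := Real.sqrt_pos.2 (by positivity)

lemma one_le_jap (x : E3) : 1 ≤ jap x := by
  rw [jap]
  calc (1:ℝ) = √1 := by simp
    _ ≤ √(1 + ‖x‖ ^ 2) := Real.sqrt_le_sqrt (by nlinarith [sq_nonneg ‖x‖])

lemma jap_le_one_add (x : E3) : jap x ≤ 1 + ‖x‖ := by
  unfold jap; exact sqrt_one_add_norm_sq_le x

lemma one_add_le_sqrt_two_jap (x : E3) : 1 + ‖x‖ ≤ √2 * jap x := by
  unfold jap; exact one_add_norm_le_sqrt_two_mul_sqrt x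

lemma measurable_jap : Measurable jap := by
  unfold jap; fun_prop

lemma J_lt_top {β : ℝ} (hβ : 3 / 2 < β) :
    (∫⁻ z : E3, ENNReal.ofReal (jap z ^ (-(2 * β)))) < ∞ := by
  have h2β : 0 < 2 * β := by linarith
  have hb : ∀ z : E3, jap z ^ (-(2 * β)) ≤ 2 ^ (2 * β / 2) * (1 + ‖z‖) ^ (-(2 * β)) := by
    intro z
    have hjap : jap z ^ (-(2 * β)) = ((1:ℝ) + ‖z‖ ^ 2) ^ (-(2 * β) / 2) := by
      rw [jap]
      exact (Real.rpow_div_two_eq_sqrt _ (by positivity)).symm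
    rw [hjap]
    exact rpow_neg_one_add_norm_sq_le z h2β
  calc (∫⁻ z : E3, ENNReal.ofReal (jap z ^ (-(2 * β))))
      ≤ ∫⁻ z : E3, ENNReal.ofReal (2 ^ (2 * β / 2) * (1 + ‖z‖) ^ (-(2 * β))) :=
        lintegral_mono fun z => ENNReal.ofReal_le_ofReal (hb z)
    _ = ∫⁻ z : E3, ENNReal.ofReal (2 ^ (2 * β / 2)) * ENNReal.ofReal ((1 + ‖z‖) ^ (-(2 * β))) := by
        simp_rw [ENNReal.ofReal_mul (by positivity : (0:ℝ) ≤ 2 ^ (2 * β / 2))]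
    _ = ENNReal.ofReal (2 ^ (2 * β / 2)) * ∫⁻ z : E3, ENNReal.ofReal ((1 + ‖z‖) ^ (-(2 * β))) :=
        lintegral_const_mul' _ _ ENNReal.ofReal_ne_top
    _ < ∞ := by
        refine ENNReal.mul_lt_top ENNReal.ofReal_lt_top ?_
        refine finite_integral_one_add_norm ?_
        rw [finrank_euclideanSpace_fin]
        norm_num
        linarith

lemma lintegral_ball_aux (x : E3) {R : ℝ} (hR : 0 < R) :
    ∫⁻ z in Metric.ball x R, ENNReal.ofReal (1 / ‖x - z‖ ^ 2) ≤
      3 * volume (Metric.ball (0 : E3) 1) * ENNReal.ofReal R := by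
  set B := volume (Metric.ball (0 : E3) 1) with hB
  have hBtop : B ≠ ∞ := measure_ball_lt_top.ne
  set ν := volume.restrict (Metric.ball x R) with hν
  have h_meas : Measurable fun z : E3 => 1 / ‖x - z‖ ^ 2 := by fun_prop
  have h_nn : ∀ z : E3, 0 ≤ 1 / ‖x - z‖ ^ 2 := fun z => by positivity
  rw [lintegral_eq_lintegral_meas_le ν (Filter.Eventually.of_forall h_nn) h_meas.aemeasurable]
  set c : ℝ := (R ^ 2)⁻¹ with hc_def
  have hc : 0 < c := by positivity
  have piece1 : (∫⁻ t in Ioc (0:ℝ) c, ν {a | t ≤ 1 / ‖x - a‖ ^ 2}) ≤ B * ENNReal.ofReal R := by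
    have hb : ∀ t : ℝ, ν {a | t ≤ 1 / ‖x - a‖ ^ 2} ≤ ENNReal.ofReal (R ^ 3) * B := by
      intro t
      calc ν {a | t ≤ 1 / ‖x - a‖ ^ 2} ≤ ν univ := measure_mono (subset_univ _)
        _ = volume (Metric.ball x R) := by rw [hν, Measure.restrict_apply_univ]
        _ = ENNReal.ofReal (R ^ finrank ℝ E3) * B := volume.addHaar_ball x hR.le
        _ = ENNReal.ofReal (R ^ 3) * B := by rw [finrank_euclideanSpace_fin]
    calc (∫⁻ t in Ioc (0:ℝ) c, ν {a | t ≤ 1 / ‖x - a‖ ^ 2})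
        ≤ ∫⁻ _ in Ioc (0:ℝ) c, ENNReal.ofReal (R ^ 3) * B := lintegral_mono fun t => hb t
      _ = ENNReal.ofReal (R ^ 3) * B * volume (Ioc (0:ℝ) c) := setLIntegral_const _ _
      _ = ENNReal.ofReal (R ^ 3) * B * ENNReal.ofReal c := by rw [Real.volume_Ioc, sub_zero]
      _ = B * (ENNReal.ofReal (R ^ 3) * ENNReal.ofReal c) := by ring
      _ = B * ENNReal.ofReal R := by
          rw [← ENNReal.ofReal_mul (by positivity)]
          congr 1
          rw [hc_def, show R ^ 3 = R * R ^ 2 by ring, mul_inv_cancel_right₀ (by positivity)]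
  have piece2 : (∫⁻ t in Ioi c, ν {a | t ≤ 1 / ‖x - a‖ ^ 2}) ≤ 2 * B * ENNReal.ofReal R := by
    have hb : ∀ t ∈ Ioi c, ν {a | t ≤ 1 / ‖x - a‖ ^ 2} ≤ ENNReal.ofReal (t ^ (-(3:ℝ)/2)) * B := by
      intro t ht
      have ht0 : 0 < t := lt_trans hc ht
      have hsub : {a : E3 | t ≤ 1 / ‖x - a‖ ^ 2} ⊆ Metric.closedBall x (√t)⁻¹ := by
        intro a ha
        have ha' : t ≤ 1 / ‖x - a‖ ^ 2 := ha
        have h0 : ‖x - a‖ ≠ 0 := by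
          intro h
          rw [h] at ha'
          norm_num at ha'
          linarith
        have hpos : 0 < ‖x - a‖ := lt_of_le_of_ne (norm_nonneg _) (Ne.symm h0)
        have hsq : ‖x - a‖ ^ 2 ≤ t⁻¹ := by
          have h1 : t * ‖x - a‖ ^ 2 ≤ 1 := (le_div_iff₀ (by positivity)).mp ha'
          rw [← one_div, le_div_iff₀ ht0]
          nlinarith
        have : ‖x - a‖ ≤ (√t)⁻¹ := by
          calc ‖x - a‖ = √(‖x - a‖ ^ 2) := (Real.sqrt_sq (norm_nonneg _)).symm
            _ ≤ √(t⁻¹) := Real.sqrt_le_sqrt hsq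
            _ = (√t)⁻¹ := Real.sqrt_inv t
        simpa [Metric.mem_closedBall, dist_eq_norm, norm_sub_rev] using this
      calc ν {a | t ≤ 1 / ‖x - a‖ ^ 2} ≤ ν (Metric.closedBall x (√t)⁻¹) := measure_mono hsub
        _ ≤ volume (Metric.closedBall x (√t)⁻¹) := Measure.restrict_le_self _
        _ = ENNReal.ofReal ((√t)⁻¹ ^ finrank ℝ E3) * B := volume.addHaar_closedBall x (by positivity)
        _ = ENNReal.ofReal (t ^ (-(3:ℝ)/2)) * B := by
            rw [finrank_euclideanSpace_fin]
            congr 2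
            rw [show (-(3:ℝ)/2) = (-3:ℝ)/2 by norm_num, Real.rpow_div_two_eq_sqrt _ ht0.le,
              ← Real.rpow_natCast (√t)⁻¹ 3, ← Real.rpow_neg_one (√t),
              ← Real.rpow_mul (Real.sqrt_nonneg t)]
            norm_num
    calc (∫⁻ t in Ioi c, ν {a | t ≤ 1 / ‖x - a‖ ^ 2})
        ≤ ∫⁻ t in Ioi c, ENNReal.ofReal (t ^ (-(3:ℝ)/2)) * B := by
          refine setLIntegral_mono' measurableSet_Ioi hb
      _ = (∫⁻ t in Ioi c, ENNReal.ofReal (t ^ (-(3:ℝ)/2))) * B := lintegral_mul_const' B _ hBtop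
      _ = ENNReal.ofReal (∫ t in Ioi c, t ^ (-(3:ℝ)/2)) * B := by
          rw [ofReal_integral_eq_lintegral_ofReal (integrableOn_Ioi_rpow_of_lt (by norm_num) hc)]
          filter_upwards [ae_restrict_mem measurableSet_Ioi] with t ht
          exact Real.rpow_nonneg (le_of_lt (lt_trans hc ht)) _
      _ = ENNReal.ofReal (2 * R) * B := by
          rw [integral_Ioi_rpow_of_lt (by norm_num) hc]
          congr 1
          have h1 : c ^ (-(3:ℝ)/2 + 1) = R := by
            rw [show (-(3:ℝ)/2 + 1) = (-1:ℝ)/2 by norm_num,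
              Real.rpow_div_two_eq_sqrt _ hc.le, hc_def, Real.sqrt_inv, Real.sqrt_sq hR.le,
              Real.rpow_neg_one, inv_inv]
          rw [h1]
          ring
      _ = 2 * B * ENNReal.ofReal R := by
          rw [ENNReal.ofReal_mul (by norm_num)]
          simp [ENNReal.ofReal_ofNat]
          ring
  calc (∫⁻ t in Ioi (0:ℝ), ν {a | t ≤ 1 / ‖x - a‖ ^ 2})
      = ∫⁻ t in Ioc (0:ℝ) c ∪ Ioi c, ν {a | t ≤ 1 / ‖x - a‖ ^ 2} := by
        rw [Ioc_union_Ioi_eq_Ioi hc.le]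
    _ ≤ (∫⁻ t in Ioc (0:ℝ) c, ν {a | t ≤ 1 / ‖x - a‖ ^ 2})
        + ∫⁻ t in Ioi c, ν {a | t ≤ 1 / ‖x - a‖ ^ 2} := lintegral_union_le _ _ _
    _ ≤ B * ENNReal.ofReal R + 2 * B * ENNReal.ofReal R := add_le_add piece1 piece2
    _ = 3 * B * ENNReal.ofReal R := by ring

theorem stmt3 (β : ℝ) (hβ : 3 / 2 < β) :
    ∃ C : ℝ, ∀ x : E3,
      (∫ z : E3, jap z ^ (-(2 * β)) / ‖x - z‖ ^ 2) ^ ((1 : ℝ) / 2) ≤ C / jap x := by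
  set B := volume (Metric.ball (0 : E3) 1) with hB
  set J := ∫⁻ z : E3, ENNReal.ofReal (jap z ^ (-(2 * β))) with hJ
  have hJtop : J < ∞ := J_lt_top hβ
  set D : ℝ≥0∞ := ENNReal.ofReal ((3:ℝ) ^ (2 * β) / 2) * (3 * B) + ENNReal.ofReal 4 * J with hD
  have hDtop : D ≠ ∞ := by
    rw [hD]
    refine ENNReal.add_ne_top.2 ⟨?_, ?_⟩
    · exact (ENNReal.mul_lt_top ENNReal.ofReal_lt_top
        (ENNReal.mul_lt_top (by norm_num) measure_ball_lt_top)).ne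
    · exact (ENNReal.mul_lt_top ENNReal.ofReal_lt_top hJtop).ne
  refine ⟨D.toReal ^ ((1:ℝ)/2), fun x => ?_⟩
  have hx0 : 0 < jap x := jap_pos x
  have hx1 : 1 ≤ jap x := one_le_jap x
  have hmeas : Measurable fun z : E3 => jap z ^ (-(2 * β)) / ‖x - z‖ ^ 2 := by
    unfold jap; fun_prop
  have hnn : ∀ z : E3, 0 ≤ jap z ^ (-(2 * β)) / ‖x - z‖ ^ 2 := fun z =>
    div_nonneg (Real.rpow_nonneg (jap_pos z).le _) (by positivity)
  have hnegtwo : jap x ^ (-(2:ℝ)) = (jap x ^ 2)⁻¹ := by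
    rw [Real.rpow_neg hx0.le, ← Real.rpow_natCast (jap x) 2]
    norm_num
  have hnt_nn : 0 ≤ jap x ^ (-(2:ℝ)) := Real.rpow_nonneg hx0.le _
  set R := jap x / 2 with hRdef
  have hRpos : 0 < R := by positivity
  have main : (∫⁻ z : E3, ENNReal.ofReal (jap z ^ (-(2 * β)) / ‖x - z‖ ^ 2)) ≤
      D * ENNReal.ofReal (jap x ^ (-(2:ℝ))) := by
    rw [← lintegral_add_compl (μ := volume)
      (fun z => ENNReal.ofReal (jap z ^ (-(2 * β)) / ‖x - z‖ ^ 2))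
      (measurableSet_ball (x := x) (ε := R))]
    have partA : (∫⁻ z in Metric.ball x R, ENNReal.ofReal (jap z ^ (-(2 * β)) / ‖x - z‖ ^ 2)) ≤
        ENNReal.ofReal ((3:ℝ) ^ (2 * β) / 2) * (3 * B) * ENNReal.ofReal (jap x ^ (-(2:ℝ))) := by
      have hpt : ∀ z ∈ Metric.ball x R, jap z ^ (-(2 * β)) / ‖x - z‖ ^ 2 ≤
          ((3:ℝ) ^ (2 * β) * jap x ^ (-(2 * β))) * (1 / ‖x - z‖ ^ 2) := by
        intro z hz
        have hdist : ‖x - z‖ < R := by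
          rw [Metric.mem_ball] at hz
          rwa [← dist_eq_norm, dist_comm]
        have h3 : jap x ≤ 3 * jap z := by
          have h1 : jap x ≤ 1 + ‖x‖ := jap_le_one_add x
          have h2 : ‖x‖ ≤ ‖z‖ + ‖x - z‖ := by
            have := norm_add_le (z : E3) (x - z)
            simpa using this
          have h4 : 1 + ‖z‖ ≤ √2 * jap z := one_add_le_sqrt_two_jap z
          have h5 : √2 ≤ 3/2 := by
            rw [show (3:ℝ)/2 = √((3/2)^2) from (Real.sqrt_sq (by norm_num)).symm]
            exact Real.sqrt_le_sqrt (by norm_num)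
          have h6 : 0 < jap z := jap_pos z
          nlinarith [Real.sqrt_nonneg (2:ℝ)]
        have hbase : jap x / 3 ≤ jap z := by linarith
        have hrp : jap z ^ (-(2 * β)) ≤ (jap x / 3) ^ (-(2 * β)) :=
          Real.rpow_le_rpow_of_nonpos (by positivity) hbase (by linarith)
        have heq : (jap x / 3) ^ (-(2 * β)) = (3:ℝ) ^ (2 * β) * jap x ^ (-(2 * β)) := by
          rw [Real.div_rpow hx0.le (by norm_num), Real.rpow_neg (by norm_num : (0:ℝ) ≤ 3),
            div_eq_mul_inv, inv_inv]
          ring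
        rw [div_eq_mul_inv, div_eq_mul_inv, one_mul]
        exact mul_le_mul_of_nonneg_right (heq ▸ hrp) (by positivity)
      calc (∫⁻ z in Metric.ball x R, ENNReal.ofReal (jap z ^ (-(2 * β)) / ‖x - z‖ ^ 2))
          ≤ ∫⁻ z in Metric.ball x R,
              ENNReal.ofReal (((3:ℝ) ^ (2 * β) * jap x ^ (-(2 * β))) * (1 / ‖x - z‖ ^ 2)) :=
            setLIntegral_mono' measurableSet_ball fun z hz =>
              ENNReal.ofReal_le_ofReal (hpt z hz)
        _ = ENNReal.ofReal ((3:ℝ) ^ (2 * β) * jap x ^ (-(2 * β))) *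
              ∫⁻ z in Metric.ball x R, ENNReal.ofReal (1 / ‖x - z‖ ^ 2) := by
            rw [← lintegral_const_mul' _ _ ENNReal.ofReal_ne_top]
            refine lintegral_congr fun z => ?_
            rw [← ENNReal.ofReal_mul
              (mul_nonneg (by positivity) (Real.rpow_nonneg hx0.le (-(2 * β))))]
        _ ≤ ENNReal.ofReal ((3:ℝ) ^ (2 * β) * jap x ^ (-(2 * β))) *
              (3 * B * ENNReal.ofReal R) :=
            mul_le_mul_right (lintegral_ball_aux x hRpos) _
        _ = (3 * B) * ENNReal.ofReal (((3:ℝ) ^ (2 * β) * jap x ^ (-(2 * β))) * R) := by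
            rw [ENNReal.ofReal_mul (mul_nonneg (by positivity) (Real.rpow_nonneg hx0.le _))]
            ring
        _ ≤ (3 * B) * ENNReal.ofReal ((3:ℝ) ^ (2 * β) / 2 * jap x ^ (-(2:ℝ))) := by
            refine mul_le_mul_right (ENNReal.ofReal_le_ofReal ?_) _
            have e1 : jap x ^ (-(2 * β)) * jap x = jap x ^ (-(2 * β) + 1) := by
              rw [Real.rpow_add hx0, Real.rpow_one]
            have e2 : jap x ^ (-(2 * β) + 1) ≤ jap x ^ (-(2:ℝ)) :=
              Real.rpow_le_rpow_of_exponent_le hx1 (by linarith)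
            calc (3:ℝ) ^ (2 * β) * jap x ^ (-(2 * β)) * R
                = (3:ℝ) ^ (2 * β) / 2 * (jap x ^ (-(2 * β)) * jap x) := by
                  rw [hRdef]; ring
              _ ≤ (3:ℝ) ^ (2 * β) / 2 * jap x ^ (-(2:ℝ)) := by
                  rw [e1]
                  exact mul_le_mul_of_nonneg_left e2 (by positivity)
        _ = ENNReal.ofReal ((3:ℝ) ^ (2 * β) / 2) * (3 * B) * ENNReal.ofReal (jap x ^ (-(2:ℝ))) := by
            rw [ENNReal.ofReal_mul (by positivity)]
            ring
    have partAc : (∫⁻ z in (Metric.ball x R)ᶜ,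
          ENNReal.ofReal (jap z ^ (-(2 * β)) / ‖x - z‖ ^ 2)) ≤
        ENNReal.ofReal 4 * J * ENNReal.ofReal (jap x ^ (-(2:ℝ))) := by
      have hpt : ∀ z ∈ (Metric.ball x R)ᶜ, jap z ^ (-(2 * β)) / ‖x - z‖ ^ 2 ≤
          (4 * jap x ^ (-(2:ℝ))) * jap z ^ (-(2 * β)) := by
        intro z hz
        have hdist : R ≤ ‖x - z‖ := by
          rw [mem_compl_iff, Metric.mem_ball, not_lt] at hz
          rwa [← dist_eq_norm, dist_comm]
        have hinv : (‖x - z‖ ^ 2)⁻¹ ≤ 4 * jap x ^ (-(2:ℝ)) := by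
          have h1 : R ^ 2 ≤ ‖x - z‖ ^ 2 := by nlinarith
          have h2 : (‖x - z‖ ^ 2)⁻¹ ≤ (R ^ 2)⁻¹ := by
            apply inv_anti₀ (by positivity) h1
          have h3 : (R ^ 2)⁻¹ = 4 * jap x ^ (-(2:ℝ)) := by
            rw [hnegtwo, hRdef, div_pow, inv_div, div_eq_mul_inv]
            norm_num
          linarith
        rw [div_eq_mul_inv]
        calc jap z ^ (-(2 * β)) * (‖x - z‖ ^ 2)⁻¹
            ≤ jap z ^ (-(2 * β)) * (4 * jap x ^ (-(2:ℝ))) :=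
              mul_le_mul_of_nonneg_left hinv (Real.rpow_nonneg (jap_pos z).le _)
          _ = (4 * jap x ^ (-(2:ℝ))) * jap z ^ (-(2 * β)) := by ring
      calc (∫⁻ z in (Metric.ball x R)ᶜ, ENNReal.ofReal (jap z ^ (-(2 * β)) / ‖x - z‖ ^ 2))
          ≤ ∫⁻ z in (Metric.ball x R)ᶜ,
              ENNReal.ofReal ((4 * jap x ^ (-(2:ℝ))) * jap z ^ (-(2 * β))) :=
            setLIntegral_mono' measurableSet_ball.compl fun z hz =>
              ENNReal.ofReal_le_ofReal (hpt z hz)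
        _ = ENNReal.ofReal (4 * jap x ^ (-(2:ℝ))) *
              ∫⁻ z in (Metric.ball x R)ᶜ, ENNReal.ofReal (jap z ^ (-(2 * β))) := by
            rw [← lintegral_const_mul' _ _ ENNReal.ofReal_ne_top]
            refine lintegral_congr fun z => ?_
            rw [← ENNReal.ofReal_mul (mul_nonneg (by norm_num) hnt_nn)]
        _ ≤ ENNReal.ofReal (4 * jap x ^ (-(2:ℝ))) * J :=
            mul_le_mul_right (setLIntegral_le_lintegral _ _) _
        _ = ENNReal.ofReal 4 * J * ENNReal.ofReal (jap x ^ (-(2:ℝ))) := by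
            rw [ENNReal.ofReal_mul (by norm_num)]
            ring
    calc (∫⁻ z in Metric.ball x R, ENNReal.ofReal (jap z ^ (-(2 * β)) / ‖x - z‖ ^ 2))
          + (∫⁻ z in (Metric.ball x R)ᶜ, ENNReal.ofReal (jap z ^ (-(2 * β)) / ‖x - z‖ ^ 2))
        ≤ ENNReal.ofReal ((3:ℝ) ^ (2 * β) / 2) * (3 * B) * ENNReal.ofReal (jap x ^ (-(2:ℝ)))
          + ENNReal.ofReal 4 * J * ENNReal.ofReal (jap x ^ (-(2:ℝ))) := add_le_add partA partAc
      _ = D * ENNReal.ofReal (jap x ^ (-(2:ℝ))) := by rw [hD, add_mul]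
  have hint : (∫ z : E3, jap z ^ (-(2 * β)) / ‖x - z‖ ^ 2) =
      (∫⁻ z : E3, ENNReal.ofReal (jap z ^ (-(2 * β)) / ‖x - z‖ ^ 2)).toReal :=
    integral_eq_lintegral_of_nonneg_ae (ae_of_all _ hnn) hmeas.aestronglyMeasurable
  have h2 : (∫⁻ z : E3, ENNReal.ofReal (jap z ^ (-(2 * β)) / ‖x - z‖ ^ 2)).toReal ≤
      D.toReal * jap x ^ (-(2:ℝ)) := by
    have := ENNReal.toReal_mono (ENNReal.mul_ne_top hDtop ENNReal.ofReal_ne_top) main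
    rwa [ENNReal.toReal_mul, ENNReal.toReal_ofReal hnt_nn] at this
  calc (∫ z : E3, jap z ^ (-(2 * β)) / ‖x - z‖ ^ 2) ^ ((1:ℝ)/2)
      ≤ (D.toReal * jap x ^ (-(2:ℝ))) ^ ((1:ℝ)/2) :=
        Real.rpow_le_rpow (integral_nonneg hnn) (hint ▸ h2) (by norm_num)
    _ = D.toReal ^ ((1:ℝ)/2) * (jap x ^ (-(2:ℝ))) ^ ((1:ℝ)/2) :=
        Real.mul_rpow ENNReal.toReal_nonneg hnt_nn
    _ = D.toReal ^ ((1:ℝ)/2) / jap x := by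
        rw [← Real.rpow_mul hx0.le, show (-(2:ℝ)) * ((1:ℝ)/2) = -1 by norm_num,
          Real.rpow_neg_one, div_eq_mul_inv (D.toReal ^ ((1:ℝ)/2)) (jap x)]

end
end

section
/- Let χ : ℝ → ℝ be a smooth function with 0 ≤ χ ≤ 1, χ(λ) = 1 for 0 ≤ λ ≤ λ₀ and χ(λ) = 0 for λ ≥ 2λ₀, where 0 < λ₀ ≤ 1/4. Suppose E : (0, ∞) → ℂ is twice continuously differentiable and satisfies |E^{(j)}(λ)| ≤ M λ^{1−j} for j = 0, 1, 2 and all 0 < λ ≤ 2λ₀. Then there is a constant C (depending only on χ) such that for every real number r, |∫₀^∞ e^{iλr} χ(λ) E(λ) dλ| ≤ C M ⟨log(⟨r⟩)⟩ / ⟨r⟩². -/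
open MeasureTheory Real Set Complex

noncomputable section

/-- Japanese bracket on ℝ. -/
def japR (t : ℝ) : ℝ := Real.sqrt (1 + t ^ 2)

lemma japR_sq (t : ℝ) : japR t ^ 2 = 1 + t ^ 2 :=
  Real.sq_sqrt (by positivity)

lemma one_le_japR (t : ℝ) : 1 ≤ japR t := by
  have : (1:ℝ) = Real.sqrt 1 := by simp
  rw [this, japR]
  exact Real.sqrt_le_sqrt (by nlinarith [sq_nonneg t])

lemma japR_pos (t : ℝ) : 0 < japR t := lt_of_lt_of_le one_pos (one_le_japR t)

lemma abs_le_japR (t : ℝ) : |t| ≤ japR t := by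
  rw [japR, show |t| = Real.sqrt (t^2) by rw [Real.sqrt_sq_eq_abs]]
  exact Real.sqrt_le_sqrt (by nlinarith)

lemma le_japR (t : ℝ) : t ≤ japR t := (le_abs_self t).trans (abs_le_japR t)

lemma log_japR_nonneg (t : ℝ) : 0 ≤ Real.log (japR t) :=
  Real.log_nonneg (one_le_japR t)

set_option maxHeartbeats 1000000 in
-- core oscillatory estimate for |r| ≥ 1
lemma core (a : ℝ) (ha : 0 < a) (ha' : a ≤ 1/2) (f f' f'' : ℝ → ℂ)
    (hd1 : ∀ x ∈ Ioi (0:ℝ), HasDerivAt f (f' x) x)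
    (hd2 : ∀ x ∈ Ioi (0:ℝ), HasDerivAt f' (f'' x) x)
    (hc2 : ContinuousOn f'' (Ioi 0))
    (M K₁ K₂ : ℝ) (hM : 0 ≤ M) (hK₁ : 0 ≤ K₁) (hK₂ : 0 ≤ K₂)
    (hb0 : ∀ x ∈ Ioc 0 a, ‖f x‖ ≤ M * x)
    (hb1 : ∀ x ∈ Ioc 0 a, ‖f' x‖ ≤ K₁ * M)
    (hb2 : ∀ x ∈ Ioc 0 a, ‖f'' x‖ ≤ K₂ * M / x)
    (hfa : ∀ x ∈ Ici a, f x = 0)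
    (r : ℝ) (hr : 1 ≤ |r|) :
    ‖∫ l in Ioi (0:ℝ), Complex.exp (Complex.I * l * r) * f l‖
      ≤ (2 * K₁ + K₂ * Real.log (japR r)) * M / r ^ 2 := by
  have hr0 : r ≠ 0 := by intro h; rw [h] at hr; simp at hr; linarith
  have hrpos : (0:ℝ) < |r| := lt_of_lt_of_le one_pos hr
  set ir : ℂ := Complex.I * r with hir_def
  have hir : ir ≠ 0 := by
    simp [hir_def, Complex.ext_iff, Complex.I_ne_zero, hr0]
  -- the antiderivative of the exponential
  set v : ℝ → ℂ := fun l => Complex.exp (Complex.I * l * r) / ir with hv_def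
  have hlin : ∀ x : ℝ, HasDerivAt (fun l : ℝ => Complex.I * (l:ℂ) * r) ir x := by
    intro x
    have h0 : HasDerivAt (fun l : ℝ => (l:ℂ)) 1 x := by
      simpa using (hasDerivAt_id x).ofReal_comp
    simpa [hir_def, mul_comm, mul_assoc, mul_left_comm] using (h0.const_mul Complex.I).mul_const (r:ℂ)
  have hv : ∀ x : ℝ, HasDerivAt v (Complex.exp (Complex.I * x * r)) x := by
    intro x
    have h2 := (Complex.hasDerivAt_exp (Complex.I * x * r)).comp x (hlin x)
    have h3 := h2.div_const ir
    have : Complex.exp (Complex.I * x * r) * ir / ir = Complex.exp (Complex.I * x * r) := by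
      field_simp
    simpa [hv_def, Function.comp, this] using h3
  have hexp_norm : ∀ x : ℝ, ‖Complex.exp (Complex.I * x * r)‖ = 1 := by
    intro x
    rw [Complex.norm_exp]
    simp
  have hv_norm : ∀ x : ℝ, ‖v x‖ = 1 / |r| := by
    intro x
    rw [hv_def]
    simp only [norm_div, hexp_norm]
    congr 1
    simp [hir_def]
  -- continuity
  have hfc : ContinuousOn f (Ioi 0) := fun x hx => (hd1 x hx).continuousAt.continuousWithinAt
  have hf'c : ContinuousOn f' (Ioi 0) := fun x hx => (hd2 x hx).continuousAt.continuousWithinAt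
  have hvc : Continuous v := by
    apply Continuous.div_const
    exact Complex.continuous_exp.comp (by continuity)
  -- f' vanishes on [a, ∞)
  have hf'a : ∀ x ∈ Ici a, f' x = 0 := by
    intro x hx
    have hx0 : x ∈ Ioi (0:ℝ) := lt_of_lt_of_le ha hx
    rcases eq_or_lt_of_le (Set.mem_Ici.mp hx) with h | h
    · -- x = a boundary case
      have hu : UniqueDiffWithinAt ℝ (Ici x) x := uniqueDiffOn_Ici x x self_mem_Ici
      have h1 : HasDerivWithinAt f (f' x) (Ici x) x := (hd1 x hx0).hasDerivWithinAt
      have h2 : HasDerivWithinAt f 0 (Ici x) x := by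
        apply (hasDerivWithinAt_const x (Ici x) (0:ℂ)).congr
        · intro y hy; exact hfa y (h ▸ hy : y ∈ Ici a)
        · exact hfa x hx
      rw [← h1.derivWithin hu, h2.derivWithin hu]
    · -- x > a : f vanishes in a neighborhood
      have hev : f =ᶠ[nhds x] (fun _ => (0:ℂ)) := by
        filter_upwards [Ioi_mem_nhds h] with y hy
        exact hfa y (Set.mem_Ici.mpr (le_of_lt hy))
      have h2 : HasDerivAt f 0 x := (hasDerivAt_const x (0:ℂ)).congr_of_eventuallyEq hev
      exact (hd1 x hx0).unique h2
  have hfa0 : f a = 0 := hfa a self_mem_Ici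
  -- δ
  set δ : ℝ := min (1/|r|) a with hδ_def
  have hδpos : 0 < δ := lt_min (by positivity) ha
  have hδa : δ ≤ a := min_le_right _ _
  have hδr : δ ≤ 1/|r| := min_le_left _ _
  have hδ1 : δ ≤ 1 := le_trans hδa (by linarith)
  -- the integrand
  set g : ℝ → ℂ := fun l => Complex.exp (Complex.I * l * r) * f l with hg_def
  have hgc : ContinuousOn g (Ioi 0) :=
    (Complex.continuous_exp.comp (by continuity)).continuousOn.mul hfc
  have hgbound : ∀ x ∈ Ioc (0:ℝ) a, ‖g x‖ ≤ M * x := by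
    intro x hx
    rw [hg_def]
    calc ‖Complex.exp (Complex.I * x * r) * f x‖ = ‖f x‖ := by
          rw [norm_mul, hexp_norm, one_mul]
      _ ≤ M * x := hb0 x hx
  have hgInt : IntegrableOn g (Ioc 0 a) := by
    have hconst : IntegrableOn (fun _ : ℝ => M * a) (Ioc 0 a) volume := by
      apply (integrableOn_const_iff).mpr
      right
      simp [Real.volume_Ioc]
    apply Integrable.mono' hconst
    · exact (hgc.mono Ioc_subset_Ioi_self).aestronglyMeasurable measurableSet_Ioc
    · rw [ae_restrict_iff' measurableSet_Ioc]
      filter_upwards with x hx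
      exact (hgbound x hx).trans (by nlinarith [hx.1, hx.2])
  -- reduction to (0, a]
  have hgIoi0 : EqOn g (fun _ => (0:ℂ)) (Ioi a) := by
    intro x hx
    show g x = 0
    simp [hg_def, hfa x (Set.mem_Ici.mpr (le_of_lt hx))]
  have hgIntIoi : IntegrableOn g (Ioi a) := by
    apply IntegrableOn.congr_fun (integrableOn_zero) (fun x hx => (hgIoi0 hx).symm) measurableSet_Ioi
  have hIoiZero : ∫ l in Ioi a, g l = 0 := by
    rw [setIntegral_congr_fun measurableSet_Ioi hgIoi0]
    simp
  have hsplit0 : ∫ l in Ioi (0:ℝ), g l = ∫ l in Ioc (0:ℝ) a, g l := by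
    rw [← Ioc_union_Ioi_eq_Ioi (le_of_lt ha),
      setIntegral_union (Ioc_disjoint_Ioi le_rfl) measurableSet_Ioi hgInt hgIntIoi,
      hIoiZero, add_zero]
  have hexpc : Continuous (fun x : ℝ => Complex.exp (Complex.I * x * r)) := by
    apply Complex.continuous_exp.comp
    continuity
  have hr2 : |r| * |r| = r ^ 2 := by rw [abs_mul_abs_self]; ring
  have hrinv1 : 1 / |r| ≤ 1 := by
    rw [div_le_one hrpos]; exact hr
  have hlogJ : 0 ≤ Real.log (japR r) := log_japR_nonneg r
  -- the log estimate
  have hL : Real.log (a / δ) ≤ Real.log (japR r) := by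
    rcases min_cases (1/|r|) a with ⟨h1, h2⟩ | ⟨h1, h2⟩
    · -- δ = 1/|r|
      rw [hδ_def, h1]
      have ha1 : a / (1/|r|) = a * |r| := by field_simp
      rw [ha1]
      apply Real.log_le_log (by positivity)
      calc a * |r| ≤ 1 * |r| := by nlinarith
        _ = |r| := one_mul _
        _ ≤ japR r := abs_le_japR r
    · -- δ = a
      rw [hδ_def, h1, div_self (ne_of_gt ha)]
      simpa using hlogJ
  -- main per-ε estimate
  have key : ∀ ε : ℝ, 0 < ε → ε < δ →
      ‖∫ l in Ioi (0:ℝ), g l‖ ≤ (2 * K₁ + K₂ * Real.log (japR r)) * M / r ^ 2 + 2 * M * ε := by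
    intro ε hε hεδ
    have hεa : ε < a := lt_of_lt_of_le hεδ hδa
    have hεδ' : ε ≤ δ := le_of_lt hεδ
    have hmemδ : δ ∈ Ioc (0:ℝ) a := ⟨hδpos, hδa⟩
    have hmemε : ε ∈ Ioc (0:ℝ) a := ⟨hε, le_of_lt hεa⟩
    have hsub_εa : uIcc ε a ⊆ Ioi (0:ℝ) := by
      rw [uIcc_of_le (le_of_lt hεa)]
      exact fun x hx => lt_of_lt_of_le hε hx.1
    have hsub_εδ : uIcc ε δ ⊆ Ioi (0:ℝ) := by
      rw [uIcc_of_le hεδ']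
      exact fun x hx => lt_of_lt_of_le hε hx.1
    have hsub_δa : uIcc δ a ⊆ Ioi (0:ℝ) := by
      rw [uIcc_of_le hδa]
      exact fun x hx => lt_of_lt_of_le hδpos hx.1
    -- integrability facts
    have hint_f'_εa : IntervalIntegrable f' volume ε a := (hf'c.mono hsub_εa).intervalIntegrable
    have hint_exp : ∀ c d : ℝ, IntervalIntegrable (fun x => Complex.exp (Complex.I * x * r)) volume c d :=
      fun c d => hexpc.continuousOn.intervalIntegrable
    have hint_f''_δa : IntervalIntegrable f'' volume δ a := (hc2.mono hsub_δa).intervalIntegrable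
    have hint_f'v : ∀ c d : ℝ, uIcc c d ⊆ Ioi (0:ℝ) →
        IntervalIntegrable (fun x => f' x * v x) volume c d :=
      fun c d h => ((hf'c.mono h).mul hvc.continuousOn).intervalIntegrable
    -- first integration by parts
    have ibp1 : ∫ x in ε..a, f x * Complex.exp (Complex.I * x * r)
        = f a * v a - f ε * v ε - ∫ x in ε..a, f' x * v x :=
      intervalIntegral.integral_mul_deriv_eq_deriv_mul
        (fun x hx => hd1 x (hsub_εa hx)) (fun x _ => hv x) hint_f'_εa (hint_exp ε a)
    -- second integration by parts
    have ibp2 : ∫ x in δ..a, f' x * Complex.exp (Complex.I * x * r)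
        = f' a * v a - f' δ * v δ - ∫ x in δ..a, f'' x * v x :=
      intervalIntegral.integral_mul_deriv_eq_deriv_mul
        (fun x hx => hd2 x (hsub_δa hx)) (fun x _ => hv x) hint_f''_δa (hint_exp δ a)
    have hdiv : ∫ x in δ..a, f' x * v x
        = (∫ x in δ..a, f' x * Complex.exp (Complex.I * x * r)) / ir := by
      rw [← intervalIntegral.integral_div]
      apply intervalIntegral.integral_congr
      intro x _
      rw [hv_def]
      ring
    -- split the f'·v integral
    have hadj : ∫ x in ε..a, f' x * v x
        = (∫ x in ε..δ, f' x * v x) + ∫ x in δ..a, f' x * v x :=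
      (intervalIntegral.integral_add_adjacent_intervals (hint_f'v ε δ hsub_εδ)
        (hint_f'v δ a hsub_δa)).symm
    -- norm bounds
    have hT1 : ‖∫ x in ε..δ, f' x * v x‖ ≤ K₁ * M / r ^ 2 := by
      have h := intervalIntegral.norm_integral_le_of_norm_le_const
        (C := K₁ * M * (1 / |r|)) (f := fun x => f' x * v x) (a := ε) (b := δ) ?_
      · calc ‖∫ x in ε..δ, f' x * v x‖ ≤ K₁ * M * (1 / |r|) * |δ - ε| := h
          _ ≤ K₁ * M * (1 / |r|) * (1 / |r|) := by
              apply mul_le_mul_of_nonneg_left _ (by positivity)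
              rw [_root_.abs_of_nonneg (by linarith : (0:ℝ) ≤ δ - ε)]
              linarith
          _ = K₁ * M / r ^ 2 := by
              rw [← hr2]; field_simp
      · intro x hx
        rw [Set.uIoc_of_le hεδ'] at hx
        have hx' : x ∈ Ioc (0:ℝ) a := ⟨lt_trans hε hx.1, le_trans hx.2 hδa⟩
        rw [norm_mul, hv_norm]
        exact mul_le_mul_of_nonneg_right (hb1 x hx') (by positivity)
    have hT3 : ‖∫ x in δ..a, f'' x * v x‖ ≤ K₂ * M / |r| * Real.log (japR r) := by
      calc ‖∫ x in δ..a, f'' x * v x‖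
          ≤ ∫ x in δ..a, ‖f'' x * v x‖ := intervalIntegral.norm_integral_le_integral_norm hδa
        _ ≤ ∫ x in δ..a, K₂ * M / |r| * (1 / x) := by
            apply intervalIntegral.integral_mono_on hδa
            · exact (((hc2.mono hsub_δa).mul hvc.continuousOn).norm).intervalIntegrable
            · apply ContinuousOn.intervalIntegrable
              apply ContinuousOn.mul continuousOn_const
              apply ContinuousOn.div continuousOn_const continuousOn_id
              intro x hx
              exact ne_of_gt (hsub_δa hx)
            · intro x hx
              have hx0 : 0 < x := lt_of_lt_of_le hδpos hx.1
              have hx' : x ∈ Ioc (0:ℝ) a := ⟨hx0, hx.2⟩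
              rw [norm_mul, hv_norm]
              calc ‖f'' x‖ * (1 / |r|) ≤ K₂ * M / x * (1 / |r|) :=
                    mul_le_mul_of_nonneg_right (hb2 x hx') (by positivity)
                _ = K₂ * M / |r| * (1 / x) := by rw [div_mul_div_comm, div_mul_div_comm, mul_comm x |r|]
        _ = K₂ * M / |r| * Real.log (a / δ) := by
            rw [intervalIntegral.integral_const_mul, integral_one_div]
            intro h
            rw [uIcc_of_le hδa] at h
            exact absurd h.1 (not_le.mpr hδpos)
        _ ≤ K₂ * M / |r| * Real.log (japR r) :=
            mul_le_mul_of_nonneg_left hL (by positivity)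
    have hT2 : ‖f' δ * v δ‖ ≤ K₁ * M * (1 / |r|) := by
      rw [norm_mul, hv_norm]
      exact mul_le_mul_of_nonneg_right (hb1 δ hmemδ) (by positivity)
    have hT0 : ‖f ε * v ε‖ ≤ M * ε := by
      rw [norm_mul, hv_norm]
      calc ‖f ε‖ * (1 / |r|) ≤ M * ε * (1 / |r|) :=
            mul_le_mul_of_nonneg_right (hb0 ε hmemε) (by positivity)
        _ ≤ M * ε * 1 := mul_le_mul_of_nonneg_left hrinv1 (by positivity)
        _ = M * ε := mul_one _
    have hirnorm : ‖ir‖ = |r| := by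
      rw [hir_def, norm_mul]
      simp
    -- bound on ∫_δ^a f' v
    have hF2 : ‖∫ x in δ..a, f' x * v x‖
        ≤ K₁ * M / r ^ 2 + K₂ * M * Real.log (japR r) / r ^ 2 := by
      rw [hdiv, ibp2, hf'a a self_mem_Ici]
      rw [norm_div, hirnorm]
      have hnum : ‖(0:ℂ) * v a - f' δ * v δ - ∫ x in δ..a, f'' x * v x‖
          ≤ K₁ * M * (1 / |r|) + K₂ * M / |r| * Real.log (japR r) := by
        rw [zero_mul, zero_sub]
        calc ‖-(f' δ * v δ) - ∫ x in δ..a, f'' x * v x‖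
            ≤ ‖-(f' δ * v δ)‖ + ‖∫ x in δ..a, f'' x * v x‖ := norm_sub_le _ _
          _ ≤ K₁ * M * (1 / |r|) + K₂ * M / |r| * Real.log (japR r) := by
              rw [norm_neg]
              exact add_le_add hT2 hT3
      calc ‖(0:ℂ) * v a - f' δ * v δ - ∫ x in δ..a, f'' x * v x‖ / |r|
          ≤ (K₁ * M * (1 / |r|) + K₂ * M / |r| * Real.log (japR r)) / |r| :=
            (div_le_div_iff_of_pos_right hrpos).mpr hnum
        _ = K₁ * M / r ^ 2 + K₂ * M * Real.log (japR r) / r ^ 2 := by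
            rw [← hr2]
            field_simp
    -- total bound for the interval integral over [ε, a]
    have hIval : ‖∫ x in ε..a, f x * Complex.exp (Complex.I * x * r)‖
        ≤ M * ε + (2 * K₁ + K₂ * Real.log (japR r)) * M / r ^ 2 := by
      rw [ibp1, hfa0, hadj]
      calc ‖(0:ℂ) * v a - f ε * v ε - ((∫ x in ε..δ, f' x * v x) + ∫ x in δ..a, f' x * v x)‖
          ≤ ‖(0:ℂ) * v a - f ε * v ε‖
            + ‖(∫ x in ε..δ, f' x * v x) + ∫ x in δ..a, f' x * v x‖ := norm_sub_le _ _
        _ ≤ M * ε + (K₁ * M / r ^ 2 + (K₁ * M / r ^ 2 + K₂ * M * Real.log (japR r) / r ^ 2)) := by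
            apply add_le_add
            · rw [zero_mul, zero_sub, norm_neg]; exact hT0
            · exact le_trans (norm_add_le _ _) (add_le_add hT1 hF2)
        _ = M * ε + (2 * K₁ + K₂ * Real.log (japR r)) * M / r ^ 2 := by ring
    have hIoc_eq : ∫ l in Ioc ε a, g l = ∫ x in ε..a, f x * Complex.exp (Complex.I * x * r) := by
      rw [← intervalIntegral.integral_of_le (le_of_lt hεa)]
      apply intervalIntegral.integral_congr
      intro x _
      simp only [hg_def]
      ring
    have hsmall : ‖∫ l in Ioc (0:ℝ) ε, g l‖ ≤ M * ε := by
      have hb : ∀ x ∈ Ioc (0:ℝ) ε, ‖g x‖ ≤ M := by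
        intro x hx
        have hx' : x ∈ Ioc (0:ℝ) a := ⟨hx.1, le_trans hx.2 (le_of_lt hεa)⟩
        calc ‖g x‖ ≤ M * x := hgbound x hx'
          _ ≤ M * 1 := mul_le_mul_of_nonneg_left
              (le_trans hx.2 (le_trans hεδ' hδ1)) hM
          _ = M := mul_one M
      have hmeas : AEStronglyMeasurable g (volume.restrict (Ioc (0:ℝ) ε)) :=
        (hgc.mono (fun x hx => hx.1)).aestronglyMeasurable measurableSet_Ioc
      have h := norm_setIntegral_le_of_norm_le_const (μ := volume) measure_Ioc_lt_top hb
      calc ‖∫ l in Ioc (0:ℝ) ε, g l‖ ≤ M * (volume (Ioc (0:ℝ) ε)).toReal := h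
        _ = M * ε := by
            rw [Real.volume_Ioc, ENNReal.toReal_ofReal (by linarith)]
            ring_nf
    have hsplitε : ∫ l in Ioc (0:ℝ) a, g l
        = (∫ l in Ioc (0:ℝ) ε, g l) + ∫ l in Ioc ε a, g l := by
      have hdisj : Disjoint (Ioc (0:ℝ) ε) (Ioc ε a) := by
        rw [Ioc_disjoint_Ioc]
        exact le_trans (min_le_left _ _) (le_max_right _ _)
      rw [← setIntegral_union hdisj measurableSet_Ioc
          (hgInt.mono_set (Ioc_subset_Ioc_right (le_of_lt hεa)))
          (hgInt.mono_set (Ioc_subset_Ioc_left (le_of_lt hε))),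
        Ioc_union_Ioc_eq_Ioc (le_of_lt hε) (le_of_lt hεa)]
    calc ‖∫ l in Ioi (0:ℝ), g l‖
        = ‖(∫ l in Ioc (0:ℝ) ε, g l) + ∫ l in Ioc ε a, g l‖ := by rw [hsplit0, hsplitε]
      _ ≤ ‖∫ l in Ioc (0:ℝ) ε, g l‖ + ‖∫ l in Ioc ε a, g l‖ := norm_add_le _ _
      _ ≤ M * ε + (M * ε + (2 * K₁ + K₂ * Real.log (japR r)) * M / r ^ 2) := by
          apply add_le_add hsmall
          rw [hIoc_eq]
          exact hIval
      _ = (2 * K₁ + K₂ * Real.log (japR r)) * M / r ^ 2 + 2 * M * ε := by ring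
  -- pass to the limit ε → 0
  apply le_of_forall_pos_le_add
  intro η hη
  have hMp : (0:ℝ) < 2 * M + 1 := by linarith
  set ε := min (δ / 2) (η / (2 * M + 1)) with hε_def
  have hεpos : 0 < ε := lt_min (by linarith) (by positivity)
  have hεδ : ε < δ := lt_of_le_of_lt (min_le_left _ _) (by linarith)
  have h2 : 2 * M * ε ≤ η := by
    have h3 : ε ≤ η / (2 * M + 1) := min_le_right _ _
    have h4 : 2 * M / (2 * M + 1) ≤ 1 := by
      rw [div_le_one hMp]; linarith
    calc 2 * M * ε ≤ 2 * M * (η / (2 * M + 1)) :=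
          mul_le_mul_of_nonneg_left h3 (by linarith)
      _ = (2 * M / (2 * M + 1)) * η := by ring
      _ ≤ 1 * η := mul_le_mul_of_nonneg_right h4 (le_of_lt hη)
      _ = η := one_mul η
  calc ‖∫ l in Ioi (0:ℝ), g l‖
      ≤ (2 * K₁ + K₂ * Real.log (japR r)) * M / r ^ 2 + 2 * M * ε := key ε hεpos hεδ
    _ ≤ (2 * K₁ + K₂ * Real.log (japR r)) * M / r ^ 2 + η := by linarith

lemma core0 (a : ℝ) (ha : 0 < a) (ha1 : a ≤ 1) (f : ℝ → ℂ)
    (hfc : ContinuousOn f (Ioi 0)) (M : ℝ) (hM : 0 ≤ M)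
    (hb0 : ∀ x ∈ Ioc 0 a, ‖f x‖ ≤ M * x)
    (hfa : ∀ x ∈ Ici a, f x = 0) (r : ℝ) :
    ‖∫ l in Ioi (0:ℝ), Complex.exp (Complex.I * l * r) * f l‖ ≤ M * a := by
  set g : ℝ → ℂ := fun l => Complex.exp (Complex.I * l * r) * f l with hg_def
  have hexp_norm : ∀ x : ℝ, ‖Complex.exp (Complex.I * x * r)‖ = 1 := by
    intro x
    rw [Complex.norm_exp]
    simp
  have hgc : ContinuousOn g (Ioi 0) :=
    ((Complex.continuous_exp.comp (by continuity)).continuousOn).mul hfc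
  have hgbound : ∀ x ∈ Ioc (0:ℝ) a, ‖g x‖ ≤ M * x := by
    intro x hx
    rw [hg_def]
    calc ‖Complex.exp (Complex.I * x * r) * f x‖ = ‖f x‖ := by
          rw [norm_mul, hexp_norm, one_mul]
      _ ≤ M * x := hb0 x hx
  have hgInt : IntegrableOn g (Ioc 0 a) := by
    have hconst : IntegrableOn (fun _ : ℝ => M * a) (Ioc 0 a) volume := by
      apply (integrableOn_const_iff).mpr
      right
      simp [Real.volume_Ioc]
    apply Integrable.mono' hconst
    · exact (hgc.mono Ioc_subset_Ioi_self).aestronglyMeasurable measurableSet_Ioc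
    · rw [ae_restrict_iff' measurableSet_Ioc]
      filter_upwards with x hx
      exact (hgbound x hx).trans (by nlinarith [hx.1, hx.2])
  have hgIoi0 : EqOn g (fun _ => (0:ℂ)) (Ioi a) := by
    intro x hx
    show g x = 0
    simp [hg_def, hfa x (Set.mem_Ici.mpr (le_of_lt hx))]
  have hgIntIoi : IntegrableOn g (Ioi a) :=
    IntegrableOn.congr_fun (integrableOn_zero) (fun x hx => (hgIoi0 hx).symm) measurableSet_Ioi
  have hIoiZero : ∫ l in Ioi a, g l = 0 := by
    rw [setIntegral_congr_fun measurableSet_Ioi hgIoi0]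
    simp
  have hsplit0 : ∫ l in Ioi (0:ℝ), g l = ∫ l in Ioc (0:ℝ) a, g l := by
    rw [← Ioc_union_Ioi_eq_Ioi (le_of_lt ha),
      setIntegral_union (Ioc_disjoint_Ioi le_rfl) measurableSet_Ioi hgInt hgIntIoi,
      hIoiZero, add_zero]
  rw [hsplit0]
  have hb : ∀ x ∈ Ioc (0:ℝ) a, ‖g x‖ ≤ M := by
    intro x hx
    calc ‖g x‖ ≤ M * x := hgbound x hx
      _ ≤ M * 1 := mul_le_mul_of_nonneg_left (le_trans hx.2 ha1) hM
      _ = M := mul_one M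
  have hmeas : AEStronglyMeasurable g (volume.restrict (Ioc (0:ℝ) a)) :=
    (hgc.mono Ioc_subset_Ioi_self).aestronglyMeasurable measurableSet_Ioc
  have h := norm_setIntegral_le_of_norm_le_const (μ := volume) measure_Ioc_lt_top hb
  calc ‖∫ l in Ioc (0:ℝ) a, g l‖ ≤ M * (volume (Ioc (0:ℝ) a)).toReal := h
    _ = M * a := by
        rw [Real.volume_Ioc, ENNReal.toReal_ofReal (by linarith)]
        ring_nf

set_option maxHeartbeats 1000000 in
theorem stmt5 (lam0 : ℝ) (hlam0 : 0 < lam0) (hlam0' : lam0 ≤ 1 / 4)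
    (χ : ℝ → ℝ) (hχ : ContDiff ℝ (⊤ : ℕ∞) χ) (hχ0 : ∀ l : ℝ, 0 ≤ χ l) (hχ1 : ∀ l : ℝ, χ l ≤ 1)
    (hχeq1 : ∀ l : ℝ, 0 ≤ l → l ≤ lam0 → χ l = 1)
    (hχeq0 : ∀ l : ℝ, 2 * lam0 ≤ l → χ l = 0) :
    ∃ C : ℝ, ∀ (E : ℝ → ℂ) (M : ℝ),
      ContDiffOn ℝ 2 E (Set.Ioi 0) →
      (∀ j : ℕ, j ≤ 2 → ∀ l : ℝ, 0 < l → l ≤ 2 * lam0 →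
        ‖iteratedDerivWithin j E (Set.Ioi 0) l‖ ≤ M * l ^ ((1 : ℝ) - j)) →
      ∀ r : ℝ,
        ‖∫ l in Set.Ioi (0 : ℝ), Complex.exp (Complex.I * l * r) * (χ l : ℂ) * E l‖
          ≤ C * M * japR (Real.log (japR r)) / japR r ^ 2 := by
  -- smoothness of derivatives of χ
  have hχs : ContDiff ℝ ((⊤ : ℕ∞) : WithTop ℕ∞) χ := hχ.of_le (by simp)
  have hχ1d : ContDiff ℝ ((⊤ : ℕ∞) : WithTop ℕ∞) (deriv χ) := by
    have := hχs.iterate_deriv 1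
    simpa using this
  have hχ2d : ContDiff ℝ ((⊤ : ℕ∞) : WithTop ℕ∞) (deriv (deriv χ)) := by
    have := hχs.iterate_deriv 2
    simpa [Function.iterate_succ, Function.comp] using this
  -- bounds for the derivatives of χ on [0,1]
  obtain ⟨B₁, hB₁⟩ := (isCompact_Icc (a := (0:ℝ)) (b := 1)).exists_bound_of_continuousOn
    (hχ1d.continuous.continuousOn)
  obtain ⟨B₂, hB₂⟩ := (isCompact_Icc (a := (0:ℝ)) (b := 1)).exists_bound_of_continuousOn
    (hχ2d.continuous.continuousOn)
  have hB₁0 : 0 ≤ B₁ := le_trans (norm_nonneg _) (hB₁ 0 ⟨le_rfl, zero_le_one⟩)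
  have hB₂0 : 0 ≤ B₂ := le_trans (norm_nonneg _) (hB₂ 0 ⟨le_rfl, zero_le_one⟩)
  set K₁ : ℝ := B₁ / 2 + 1 with hK₁_def
  set K₂ : ℝ := B₂ + 2 * B₁ + 1 with hK₂_def
  have hK₁ : 0 ≤ K₁ := by rw [hK₁_def]; linarith
  have hK₂ : 0 ≤ K₂ := by rw [hK₂_def]; linarith
  refine ⟨2 * (2 * K₁ + K₂) + 1, ?_⟩
  intro E M hE hEb r
  set a : ℝ := 2 * lam0 with ha_def
  have ha : 0 < a := by rw [ha_def]; linarith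
  have ha' : a ≤ 1 / 2 := by rw [ha_def]; linarith
  -- M is nonnegative
  have hM : 0 ≤ M := by
    have h := hEb 0 (by norm_num) lam0 hlam0 (by linarith)
    rw [iteratedDerivWithin_zero] at h
    have h2 : lam0 ^ ((1:ℝ) - (0:ℕ)) = lam0 := by
      push_cast
      rw [sub_zero, Real.rpow_one]
    rw [h2] at h
    nlinarith [norm_nonneg (E lam0)]
  -- derivatives of E
  set E1 : ℝ → ℂ := deriv E with hE1_def
  set E2 : ℝ → ℂ := deriv (deriv E) with hE2_def
  have hEd1 : ∀ x ∈ Ioi (0:ℝ), HasDerivAt E (E1 x) x := by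
    intro x hx
    exact ((hE.differentiableOn (by norm_num)).differentiableAt
      (isOpen_Ioi.mem_nhds hx)).hasDerivAt
  have hE' : ContDiffOn ℝ 1 (deriv E) (Ioi 0) :=
    hE.deriv_of_isOpen (m := 1) isOpen_Ioi (by norm_num)
  have hEd2 : ∀ x ∈ Ioi (0:ℝ), HasDerivAt E1 (E2 x) x := by
    intro x hx
    exact ((hE'.differentiableOn (by norm_num)).differentiableAt
      (isOpen_Ioi.mem_nhds hx)).hasDerivAt
  have hE2c : ContinuousOn E2 (Ioi 0) :=
    (hE'.deriv_of_isOpen (m := 0) isOpen_Ioi (by norm_num)).continuousOn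
  have hE1c : ContinuousOn E1 (Ioi 0) := hE'.continuousOn
  have hEc : ContinuousOn E (Ioi 0) := hE.continuousOn
  -- bounds on E and its derivatives
  have hEb0 : ∀ l : ℝ, 0 < l → l ≤ a → ‖E l‖ ≤ M * l := by
    intro l hl hla
    have h := hEb 0 (by norm_num) l hl hla
    rw [iteratedDerivWithin_zero] at h
    have h2 : l ^ ((1:ℝ) - (0:ℕ)) = l := by
      push_cast
      rw [sub_zero, Real.rpow_one]
    rwa [h2] at h
  have hEb1 : ∀ l : ℝ, 0 < l → l ≤ a → ‖E1 l‖ ≤ M := by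
    intro l hl hla
    have h := hEb 1 (by norm_num) l hl hla
    rw [iteratedDerivWithin_one,
      derivWithin_of_isOpen isOpen_Ioi hl] at h
    have h2 : l ^ ((1:ℝ) - (1:ℕ)) = 1 := by
      push_cast
      rw [sub_self, Real.rpow_zero]
    rw [h2, mul_one] at h
    exact h
  have hEb2 : ∀ l : ℝ, 0 < l → l ≤ a → ‖E2 l‖ ≤ M / l := by
    intro l hl hla
    have h := hEb 2 le_rfl l hl hla
    have heq : iteratedDerivWithin 2 E (Ioi 0) l = E2 l := by
      rw [show (2:ℕ) = 1 + 1 from rfl, iteratedDerivWithin_succ,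
        derivWithin_of_isOpen isOpen_Ioi hl, hE2_def]
      apply Filter.EventuallyEq.deriv_eq
      filter_upwards [isOpen_Ioi.mem_nhds hl] with y hy
      rw [iteratedDerivWithin_one,
        derivWithin_of_isOpen isOpen_Ioi hy]
    rw [heq] at h
    have h2 : l ^ ((1:ℝ) - (2:ℕ)) = 1 / l := by
      push_cast
      rw [show (1:ℝ) - 2 = -1 by norm_num, Real.rpow_neg_one, one_div]
    rw [h2] at h
    calc ‖E2 l‖ ≤ M * (1 / l) := h
      _ = M / l := by ring
  -- derivative facts for χ
  have hχd : ∀ x : ℝ, HasDerivAt χ (deriv χ x) x :=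
    fun x => (hχs.differentiable (by simp)).differentiableAt.hasDerivAt
  have hχ'd : ∀ x : ℝ, HasDerivAt (deriv χ) (deriv (deriv χ) x) x :=
    fun x => (hχ1d.differentiable (by simp)).differentiableAt.hasDerivAt
  -- the function f and its derivatives
  set f : ℝ → ℂ := fun l => (χ l : ℂ) * E l with hf_def
  set f' : ℝ → ℂ := fun l => ((deriv χ l : ℝ) : ℂ) * E l + (χ l : ℂ) * E1 l with hf'_def
  set f'' : ℝ → ℂ := fun l =>
    (((deriv (deriv χ) l : ℝ) : ℂ) * E l + ((deriv χ l : ℝ) : ℂ) * E1 l)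
      + (((deriv χ l : ℝ) : ℂ) * E1 l + (χ l : ℂ) * E2 l) with hf''_def
  have hd1 : ∀ x ∈ Ioi (0:ℝ), HasDerivAt f (f' x) x := by
    intro x hx
    exact ((hχd x).ofReal_comp).mul (hEd1 x hx)
  have hd2 : ∀ x ∈ Ioi (0:ℝ), HasDerivAt f' (f'' x) x := by
    intro x hx
    exact (((hχ'd x).ofReal_comp).mul (hEd1 x hx)).add
      (((hχd x).ofReal_comp).mul (hEd2 x hx))
  have hc2 : ContinuousOn f'' (Ioi 0) := by
    apply ContinuousOn.add
    · exact ((Complex.continuous_ofReal.comp hχ2d.continuous).continuousOn.mul hEc).add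
        ((Complex.continuous_ofReal.comp hχ1d.continuous).continuousOn.mul hE1c)
    · exact ((Complex.continuous_ofReal.comp hχ1d.continuous).continuousOn.mul hE1c).add
        ((Complex.continuous_ofReal.comp hχs.continuous).continuousOn.mul hE2c)
  -- norms of real coefficients
  have hnorm_real : ∀ t : ℝ, ‖(t : ℂ)‖ = |t| := fun t => Complex.norm_real t
  -- the pointwise bounds
  have hb0 : ∀ x ∈ Ioc (0:ℝ) a, ‖f x‖ ≤ M * x := by
    intro x hx
    rw [hf_def]
    calc ‖(χ x : ℂ) * E x‖ = |χ x| * ‖E x‖ := by rw [norm_mul, hnorm_real]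
      _ ≤ 1 * (M * x) := by
          apply mul_le_mul _ (hEb0 x hx.1 hx.2) (norm_nonneg _) zero_le_one
          rw [_root_.abs_of_nonneg (hχ0 x)]
          exact hχ1 x
      _ = M * x := one_mul _
  have hmemIcc : ∀ x ∈ Ioc (0:ℝ) a, x ∈ Icc (0:ℝ) 1 :=
    fun x hx => ⟨le_of_lt hx.1, le_trans hx.2 (by linarith)⟩
  have hb1 : ∀ x ∈ Ioc (0:ℝ) a, ‖f' x‖ ≤ K₁ * M := by
    intro x hx
    rw [hf'_def]
    have h1 : ‖((deriv χ x : ℝ) : ℂ) * E x‖ ≤ B₁ * (M * x) := by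
      rw [norm_mul, hnorm_real]
      exact mul_le_mul (hB₁ x (hmemIcc x hx)) (hEb0 x hx.1 hx.2) (norm_nonneg _) hB₁0
    have h2 : ‖(χ x : ℂ) * E1 x‖ ≤ 1 * M := by
      rw [norm_mul, hnorm_real]
      apply mul_le_mul _ (hEb1 x hx.1 hx.2) (norm_nonneg _) zero_le_one
      rw [_root_.abs_of_nonneg (hχ0 x)]
      exact hχ1 x
    calc ‖((deriv χ x : ℝ) : ℂ) * E x + (χ x : ℂ) * E1 x‖
        ≤ ‖((deriv χ x : ℝ) : ℂ) * E x‖ + ‖(χ x : ℂ) * E1 x‖ := norm_add_le _ _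
      _ ≤ B₁ * (M * x) + 1 * M := add_le_add h1 h2
      _ ≤ K₁ * M := by
          rw [hK₁_def]
          nlinarith [hx.1, hx.2, mul_nonneg hB₁0 hM]
  have hb2 : ∀ x ∈ Ioc (0:ℝ) a, ‖f'' x‖ ≤ K₂ * M / x := by
    intro x hx
    have hx0 : 0 < x := hx.1
    have hx1 : x ≤ 1 := le_trans hx.2 (by linarith)
    have hxx : x * x ≤ 1 := by nlinarith
    rw [hf''_def]
    have h1 : ‖((deriv (deriv χ) x : ℝ) : ℂ) * E x‖ ≤ B₂ * (M * x) := by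
      rw [norm_mul, hnorm_real]
      exact mul_le_mul (hB₂ x (hmemIcc x hx)) (hEb0 x hx.1 hx.2) (norm_nonneg _) hB₂0
    have h2 : ‖((deriv χ x : ℝ) : ℂ) * E1 x‖ ≤ B₁ * M := by
      rw [norm_mul, hnorm_real]
      exact mul_le_mul (hB₁ x (hmemIcc x hx)) (hEb1 x hx.1 hx.2) (norm_nonneg _) hB₁0
    have h3 : ‖(χ x : ℂ) * E2 x‖ ≤ M / x := by
      rw [norm_mul, hnorm_real]
      calc |χ x| * ‖E2 x‖ ≤ 1 * (M / x) := by
            apply mul_le_mul _ (hEb2 x hx.1 hx.2) (norm_nonneg _) zero_le_one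
            rw [_root_.abs_of_nonneg (hχ0 x)]
            exact hχ1 x
        _ = M / x := one_mul _
    calc ‖(((deriv (deriv χ) x : ℝ) : ℂ) * E x + ((deriv χ x : ℝ) : ℂ) * E1 x)
          + (((deriv χ x : ℝ) : ℂ) * E1 x + (χ x : ℂ) * E2 x)‖
        ≤ ‖((deriv (deriv χ) x : ℝ) : ℂ) * E x + ((deriv χ x : ℝ) : ℂ) * E1 x‖
          + ‖((deriv χ x : ℝ) : ℂ) * E1 x + (χ x : ℂ) * E2 x‖ := norm_add_le _ _
      _ ≤ (‖((deriv (deriv χ) x : ℝ) : ℂ) * E x‖ + ‖((deriv χ x : ℝ) : ℂ) * E1 x‖)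
          + (‖((deriv χ x : ℝ) : ℂ) * E1 x‖ + ‖(χ x : ℂ) * E2 x‖) :=
          add_le_add (norm_add_le _ _) (norm_add_le _ _)
      _ ≤ (B₂ * (M * x) + B₁ * M) + (B₁ * M + M / x) := by
          exact add_le_add (add_le_add h1 h2) (add_le_add h2 h3)
      _ ≤ K₂ * M / x := by
          rw [hK₂_def, mul_div_assoc]
          have h4 : M * x ≤ M / x := by
            rw [le_div_iff₀ hx0]; nlinarith
          have h5 : M ≤ M / x := by
            rw [le_div_iff₀ hx0]; nlinarith
          nlinarith [mul_le_mul_of_nonneg_left h4 hB₂0, mul_le_mul_of_nonneg_left h5 hB₁0]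
  have hfa : ∀ x ∈ Ici a, f x = 0 := by
    intro x hx
    rw [hf_def]
    simp [hχeq0 x hx]
  -- rewrite the integrand
  have hint_eq : (∫ l in Ioi (0:ℝ), Complex.exp (Complex.I * l * r) * (χ l : ℂ) * E l)
      = ∫ l in Ioi (0:ℝ), Complex.exp (Complex.I * l * r) * f l := by
    apply setIntegral_congr_fun measurableSet_Ioi
    intro l _
    rw [hf_def]
    ring
  rw [hint_eq]
  -- japR facts
  have hJ1 : 1 ≤ japR r := one_le_japR r
  have hJsq : japR r ^ 2 = 1 + r ^ 2 := japR_sq r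
  have hLJ0 : 0 ≤ Real.log (japR r) := log_japR_nonneg r
  have hJL1 : 1 ≤ japR (Real.log (japR r)) := one_le_japR _
  have hJLle : Real.log (japR r) ≤ japR (Real.log (japR r)) := le_japR _
  rcases le_or_gt 1 |r| with hr | hr
  · -- |r| ≥ 1 : use the core estimate
    have hcore := core a ha ha' f f' f'' hd1 hd2 hc2 M K₁ K₂ hM hK₁ hK₂ hb0 hb1 hb2 hfa r hr
    refine le_trans hcore ?_
    have hr2 : 1 ≤ r ^ 2 := by nlinarith [abs_mul_abs_self r]
    rw [div_le_div_iff₀ (by positivity) (by positivity), hJsq]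
    have hr0 : (0:ℝ) ≤ r ^ 2 := sq_nonneg r
    have h1 : 0 ≤ K₁ * M * (r ^ 2 - 1) :=
      mul_nonneg (mul_nonneg hK₁ hM) (by linarith)
    have h2 : 0 ≤ K₁ * M * (japR (Real.log (japR r)) - 1) * r ^ 2 :=
      mul_nonneg (mul_nonneg (mul_nonneg hK₁ hM) (by linarith)) hr0
    have h3 : 0 ≤ K₂ * M * (japR (Real.log (japR r)) - Real.log (japR r)) * r ^ 2 :=
      mul_nonneg (mul_nonneg (mul_nonneg hK₂ hM) (by linarith)) hr0
    have h4 : 0 ≤ K₂ * M * Real.log (japR r) * (r ^ 2 - 1) :=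
      mul_nonneg (mul_nonneg (mul_nonneg hK₂ hM) hLJ0) (by linarith)
    have h5 : 0 ≤ M * japR (Real.log (japR r)) * r ^ 2 :=
      mul_nonneg (mul_nonneg hM (by linarith)) hr0
    nlinarith [h1, h2, h3, h4, h5]
  · -- |r| < 1 : trivial bound
    have hfc : ContinuousOn f (Ioi 0) :=
      (Complex.continuous_ofReal.comp hχs.continuous).continuousOn.mul hEc
    have h := core0 a ha (by linarith) f hfc M hM hb0 hfa r
    refine le_trans h ?_
    have hr2 : r ^ 2 < 1 := by nlinarith [abs_mul_abs_self r, abs_nonneg r]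
    rw [le_div_iff₀ (by positivity), hJsq]
    have hC : (1:ℝ) ≤ 2 * (2 * K₁ + K₂) + 1 := by linarith
    have h1 : 0 ≤ M * a * (1 - r ^ 2) := mul_nonneg (mul_nonneg hM ha.le) (by linarith)
    have h2 : 0 ≤ M * (1 - 2 * a) := mul_nonneg hM (by linarith)
    have h3 : 0 ≤ (2 * (2 * K₁ + K₂) + 1 - 1) * japR (Real.log (japR r)) * M :=
      mul_nonneg (mul_nonneg (by linarith) (by linarith)) hM
    have h4 : 0 ≤ (japR (Real.log (japR r)) - 1) * M := mul_nonneg (by linarith) hM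
    nlinarith [h1, h2, h3, h4]


end
end
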